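/- Let D be a rooted digraph with root r, v ∈ V−r, and S ∈ 𝔖_D(v). Then B_{S,v,D} is a v-bubble of D, ent_{D−rv}(B_{S,v,D}) = S, and every in-neighbour of v in D−rv belongs to B_{S,v,D}. -/

import Mathlib

namespace FlamePaper

universe u
variable {V : Type u}

/-- A (nonempty, repetition-free) directed path, given by the list of its vertices;
its edge set consists of the pairs of consecutive vertices. A one-vertex list is the
trivial `v→v` path. -/
structure DiPath (V : Type u) where
  verts : List V
  ne : verts ≠ []
  nodup : verts.Nodup

namespace DiPath
variable (P : DiPath V)
def first : V := P.verts.head P.ne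
def last : V := P.verts.getLast P.ne
def vertexSet : Set V := {x | x ∈ P.verts}
def edges : Set (V × V) := {e | e ∈ P.verts.zip P.verts.tail}
def internal : Set V := P.vertexSet \ {P.first, P.last}
/-- The last edge of `P` (as a set; empty for the trivial path). -/
def lastEdge : Set (V × V) := {e ∈ P.edges | e.2 = P.last}
end DiPath

/-- `P` is a path of the digraph `D`. -/
def IsPathIn (D : Set (V × V)) (P : DiPath V) : Prop := P.edges ⊆ D

/-- `P` is an `a→b` path in `D`. -/
def IsPath (D : Set (V × V)) (a b : V) (P : DiPath V) : Prop :=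
  IsPathIn D P ∧ P.first = a ∧ P.last = b

/-- The set of ingoing edges of `v` in `D`. -/
def inEdges (D : Set (V × V)) (v : V) : Set (V × V) := {e ∈ D | e.2 = v}

/-- The set of outgoing edges of `v` in `D`. -/
def outEdges (D : Set (V × V)) (v : V) : Set (V × V) := {e ∈ D | e.1 = v}

/-- A rooted digraph: the root has no ingoing edges. -/
def IsRooted (D : Set (V × V)) (r : V) : Prop := inEdges D r = ∅

/-- `Ps` is a system of internally disjoint `r→v` paths in `D`: any two distinct
members share exactly the vertices `r` and `v`. -/
def IntDisjSystem (D : Set (V × V)) (r v : V) (Ps : Set (DiPath V)) : Prop :=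
  (∀ P ∈ Ps, IsPath D r v P) ∧
  ∀ P ∈ Ps, ∀ Q ∈ Ps, P ≠ Q → P.vertexSet ∩ Q.vertexSet = {r, v}

/-- `A_last(Ps)`: the set of last edges of the paths in `Ps`. -/
def lastEdges (Ps : Set (DiPath V)) : Set (V × V) := ⋃ P ∈ Ps, P.lastEdge

/-- `𝒢_D(v)`: the set of those `I ⊆ in_D(v)` which arise as the set of last edges
of a system of internally disjoint `r→v` paths of `D`. -/
def GSet (D : Set (V × V)) (r v : V) : Set (Set (V × V)) :=
  {I | ∃ Ps, IntDisjSystem D r v Ps ∧ lastEdges Ps = I}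

/-- `Ps ∈ ℑ_D(v)`: an internally disjoint system of `r→v` paths of `D` from each member
of which one can choose either an internal vertex or an edge so that the resulting set
meets every `r→v` path of `D`. -/
def EMSystem (D : Set (V × V)) (r v : V) (Ps : Set (DiPath V)) : Prop :=
  IntDisjSystem D r v Ps ∧
  ∃ sel : DiPath V → V ⊕ (V × V),
    (∀ P ∈ Ps, (∀ x, sel P = Sum.inl x → x ∈ P.internal) ∧
              (∀ e, sel P = Sum.inr e → e ∈ P.edges)) ∧
    ∀ Q : DiPath V, IsPath D r v Q →
      ∃ P ∈ Ps, (∀ x, sel P = Sum.inl x → x ∈ Q.vertexSet) ∧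
               (∀ e, sel P = Sum.inr e → e ∈ Q.edges)

/-- The path-system `Ps` lies in `L`. -/
def LiesIn (Ps : Set (DiPath V)) (L : Set (V × V)) : Prop := ∀ P ∈ Ps, IsPathIn L P

/-- `L` is a `D`-vertex-large spanning subdigraph of `D`. -/
def IsLarge (D L : Set (V × V)) (r : V) : Prop :=
  L ⊆ D ∧ ∀ v, v ≠ r → ∃ Ps, EMSystem D r v Ps ∧ LiesIn Ps L

/-- `F` is a vertex-flame with root `r`. -/
def IsFlame (F : Set (V × V)) (r : V) : Prop :=
  ∀ v, v ≠ r → inEdges F v ∈ GSet F r v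

/-- `F` is a quasi-vertex-flame with root `r`. -/
def IsQuasiFlame (F : Set (V × V)) (r : V) : Prop :=
  ∀ v, v ≠ r → ∀ I ⊆ inEdges F v, I.Finite → I ∈ GSet F r v

/-- `S` separates `b` from `a` in `D`: every `a→b` path of `D` meets `S`. -/
def Separates (D : Set (V × V)) (a b : V) (S : Set V) : Prop :=
  ∀ P : DiPath V, IsPath D a b P → (P.vertexSet ∩ S).Nonempty

/-- `𝔖_D(v)`: the Erdős–Menger separations corresponding to `v`. -/
def SepSet (D : Set (V × V)) (r v : V) : Set (Set V) :=
  {S | r ∉ S ∧ v ∉ S ∧ Separates (D \ {(r, v)}) r v S ∧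
    ∃ Ps, IntDisjSystem D r v Ps ∧
      ∃ sel : DiPath V → V, (∀ P ∈ Ps, sel P ∈ P.internal) ∧ S = sel '' Ps}

/-- The entrance of `X` with respect to `D`. -/
def entrance (D : Set (V × V)) (X : Set V) : Set V :=
  {v ∈ X | ∃ u, u ∉ X ∧ (u, v) ∈ D}

/-- `int_D(X) = X ∖ ent_D(X)`. -/
def interiorSet (D : Set (V × V)) (X : Set V) : Set V := X \ entrance D X

/-- `B` is a `v`-bubble of `D` (with root `r`): `B ⊆ V − r` and there is a `v`-infan
`{P_u : u ∈ ent_D(B)}` in `D ∩ (B × B)` where `P_u` starts at `u`. -/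
def IsBubble (D : Set (V × V)) (r v : V) (B : Set V) : Prop :=
  r ∉ B ∧
  ∃ F : V → DiPath V,
    (∀ u ∈ entrance D B, IsPath (D ∩ B ×ˢ B) u v (F u)) ∧
    ∀ u ∈ entrance D B, ∀ u' ∈ entrance D B, u ≠ u' →
      (F u).vertexSet ∩ (F u').vertexSet = {v}

/-- `bubb_D(v)`. -/
def bubbles (D : Set (V × V)) (r v : V) : Set (Set V) := {B | IsBubble D r v B}

/-- `B_{v,D}`: the union of all `v`-bubbles of `D`. -/
def maxBubble (D : Set (V × V)) (r v : V) : Set V := ⋃₀ bubbles D r v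

/-- `B_{S,v,D}`: the set of vertices `u` such that every `r→u` path of `D−rv` meets `S`. -/
def Bset (D : Set (V × V)) (r v : V) (S : Set V) : Set V :=
  {u | ∀ P : DiPath V, IsPath (D \ {(r, v)}) r u P → (P.vertexSet ∩ S).Nonempty}

/-- `Ps` is an `r`-fan in `D`: paths of `D` starting at `r`, any two distinct members
having only the vertex `r` in common. -/
def IsRFan (D : Set (V × V)) (r : V) (Ps : Set (DiPath V)) : Prop :=
  (∀ P ∈ Ps, IsPathIn D P ∧ P.first = r) ∧
  ∀ P ∈ Ps, ∀ Q ∈ Ps, P ≠ Q → P.vertexSet ∩ Q.vertexSet = {r}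

/-- The set of first vertices of the paths in `Ps`. -/
def Vfirst (Ps : Set (DiPath V)) : Set V := DiPath.first '' Ps

/-- The set of last vertices of the paths in `Ps`. -/
def Vlast (Ps : Set (DiPath V)) : Set V := DiPath.last '' Ps

/-- `P` is an `X→Y` path in `D`: exactly its first vertex lies in `X` and
exactly its last vertex lies in `Y`. -/
def IsXYPath (D : Set (V × V)) (X Y : Set V) (P : DiPath V) : Prop :=
  IsPathIn D P ∧ P.vertexSet ∩ X = {P.first} ∧ P.vertexSet ∩ Y = {P.last}

/-- `Ps` is a system of pairwise (vertex-)disjoint `X→Y` paths of `D`. -/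
def DisjXYSystem (D : Set (V × V)) (X Y : Set V) (Ps : Set (DiPath V)) : Prop :=
  (∀ P ∈ Ps, IsXYPath D X Y P) ∧
  ∀ P ∈ Ps, ∀ Q ∈ Ps, P ≠ Q → P.vertexSet ∩ Q.vertexSet = ∅

/-- `κ_D(r,v)`: the maximum size of a (finite) system of internally disjoint `r→v`
paths of `D`. -/
noncomputable def kappa (D : Set (V × V)) (r v : V) : ℕ :=
  sSup {n : ℕ | ∃ Ps : Set (DiPath V), IntDisjSystem D r v Ps ∧ Ps.Finite ∧ Ps.ncard = n}

section Aux
namespace DiPath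
variable {V : Type u} (P : DiPath V)

lemma len_pos : 0 < P.verts.length := List.length_pos_iff.2 P.ne

lemma mem_vertexSet_iff {x : V} : x ∈ P.vertexSet ↔ x ∈ P.verts := Iff.rfl

lemma first_eq : P.first = P.verts[0]'P.len_pos := List.head_eq_getElem _

lemma last_eq : P.last = P.verts[P.verts.length - 1]'(by have := P.len_pos; omega) :=
  List.getLast_eq_getElem _

lemma mem_edges_iff {a b : V} :
    (a, b) ∈ P.edges ↔ ∃ i : ℕ, ∃ h : i + 1 < P.verts.length,
      P.verts[i] = a ∧ P.verts[i+1] = b := by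
  constructor
  · intro hmem
    rw [edges, Set.mem_setOf_eq, List.mem_iff_getElem] at hmem
    obtain ⟨i, hi, hab⟩ := hmem
    have hlen : i + 1 < P.verts.length := by
      simp only [List.length_zip, List.length_tail] at hi; omega
    refine ⟨i, hlen, ?_, ?_⟩
    · have := congrArg Prod.fst hab
      simpa [List.getElem_zip] using this
    · have := congrArg Prod.snd hab
      simpa [List.getElem_zip, List.getElem_tail] using this
  · rintro ⟨i, h, ha, hb⟩
    rw [edges, Set.mem_setOf_eq, List.mem_iff_getElem]
    refine ⟨i, by simp [List.length_zip, List.length_tail]; omega, ?_⟩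
    simp [List.getElem_zip, List.getElem_tail, ha, hb]

lemma first_mem : P.first ∈ P.vertexSet := by
  rw [mem_vertexSet_iff, first_eq]; exact List.getElem_mem _

lemma last_mem : P.last ∈ P.vertexSet := by
  rw [mem_vertexSet_iff, last_eq]; exact List.getElem_mem _

/-- Trivial path. -/
def single (x : V) : DiPath V := ⟨[x], by simp, by simp⟩

@[simp] lemma single_first (x : V) : (single x).first = x := rfl
@[simp] lemma single_last (x : V) : (single x).last = x := rfl
@[simp] lemma single_vertexSet (x : V) : (single x).vertexSet = {x} := by
  ext y; simp [single, vertexSet]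
@[simp] lemma single_edges (x : V) : (single x).edges = ∅ := by
  ext e; simp [single, edges]

/-- Prefix of `P` up to (and including) index `i`. -/
def prefixTo (i : ℕ) : DiPath V :=
  ⟨P.verts.take (i+1),
   by have := P.len_pos; simp [← List.length_pos_iff]; omega,
   P.nodup.sublist (List.take_sublist _ _)⟩

lemma prefixTo_first (i : ℕ) : (P.prefixTo i).first = P.first := by
  rw [first_eq, first_eq]
  simp [prefixTo, List.getElem_take]

lemma prefixTo_last {i : ℕ} (h : i < P.verts.length) :
    (P.prefixTo i).last = P.verts[i] := by
  rw [last_eq]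
  have hl : (P.verts.take (i+1)).length = i + 1 := by simp; omega
  simp only [prefixTo]
  rw [List.getElem_take]
  congr 1
  omega

lemma prefixTo_mem_iff {i : ℕ} {x : V} :
    x ∈ (P.prefixTo i).vertexSet ↔ ∃ j : ℕ, ∃ h : j < P.verts.length, j ≤ i ∧ P.verts[j] = x := by
  simp only [prefixTo, vertexSet, Set.mem_setOf_eq, List.mem_iff_getElem]
  constructor
  · rintro ⟨j, hj, hx⟩
    have hj' : j < P.verts.length ∧ j ≤ i := by simp at hj; omega
    exact ⟨j, hj'.1, hj'.2, by rw [← hx, List.getElem_take]⟩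
  · rintro ⟨j, hj, hji, hx⟩
    exact ⟨j, by simp; omega, by rw [List.getElem_take]; exact hx⟩

lemma prefixTo_vertexSet_subset (i : ℕ) : (P.prefixTo i).vertexSet ⊆ P.vertexSet := by
  intro x hx
  rw [prefixTo_mem_iff] at hx
  obtain ⟨j, hj, _, hx⟩ := hx
  rw [mem_vertexSet_iff, List.mem_iff_getElem]; exact ⟨j, hj, hx⟩

lemma prefixTo_edges_subset (i : ℕ) : (P.prefixTo i).edges ⊆ P.edges := by
  rintro ⟨a, b⟩ he
  rw [mem_edges_iff] at he ⊢
  obtain ⟨j, hj, ha, hb⟩ := he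
  have hj' : j + 1 < P.verts.length := by simp [prefixTo] at hj; omega
  exact ⟨j, hj', by rw [← ha]; simp [prefixTo, List.getElem_take],
    by rw [← hb]; simp [prefixTo, List.getElem_take]⟩

/-- Suffix of `P` from index `i` on. -/
def suffixFrom (i : ℕ) : DiPath V :=
  if h : i < P.verts.length then
    ⟨P.verts.drop i, by simp [← List.length_pos_iff]; omega,
     P.nodup.sublist (List.drop_sublist _ _)⟩
  else P

lemma suffixFrom_verts {i : ℕ} (h : i < P.verts.length) :
    (P.suffixFrom i).verts = P.verts.drop i := by simp [suffixFrom, h]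

lemma suffixFrom_first {i : ℕ} (h : i < P.verts.length) :
    (P.suffixFrom i).first = P.verts[i] := by
  rw [first_eq]
  simp only [suffixFrom, h, dif_pos]
  rw [List.getElem_drop]
  congr 1

lemma suffixFrom_last {i : ℕ} (h : i < P.verts.length) :
    (P.suffixFrom i).last = P.last := by
  rw [last_eq, last_eq]
  simp only [suffixFrom, h, dif_pos]
  rw [List.getElem_drop]
  congr 1
  simp; omega

lemma suffixFrom_mem_iff {i : ℕ} (h : i < P.verts.length) {x : V} :
    x ∈ (P.suffixFrom i).vertexSet ↔ ∃ k : ℕ, ∃ hk : k < P.verts.length, i ≤ k ∧ P.verts[k] = x := by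
  simp only [vertexSet, Set.mem_setOf_eq, suffixFrom, h, dif_pos, List.mem_iff_getElem]
  constructor
  · rintro ⟨j, hj, hx⟩
    refine ⟨i + j, by simp at hj; omega, by omega, ?_⟩
    rw [← hx, List.getElem_drop]
  · rintro ⟨k, hk, hik, hx⟩
    refine ⟨k - i, by simp; omega, ?_⟩
    rw [List.getElem_drop, ← hx]
    congr 1
    omega

lemma suffixFrom_edges_iff {i : ℕ} (h : i < P.verts.length) {a b : V} :
    (a, b) ∈ (P.suffixFrom i).edges ↔
      ∃ k : ℕ, ∃ hk : k + 1 < P.verts.length, i ≤ k ∧ P.verts[k] = a ∧ P.verts[k+1] = b := by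
  rw [mem_edges_iff]
  simp only [suffixFrom, h, dif_pos]
  constructor
  · rintro ⟨j, hj, ha, hb⟩
    refine ⟨i + j, by simp at hj ⊢; omega, by omega, ?_, ?_⟩
    · rw [← ha, List.getElem_drop]
    · rw [← hb, List.getElem_drop]; congr 1
  · rintro ⟨k, hk, hik, ha, hb⟩
    refine ⟨k - i, by simp; omega, ?_, ?_⟩
    · rw [List.getElem_drop, ← ha]; congr 1; omega
    · rw [List.getElem_drop, ← hb]; congr 1; omega

open Classical in
/-- Append a new vertex. -/
noncomputable def snoc (x : V) : DiPath V :=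
  if h : x ∈ P.verts then P else
    ⟨P.verts ++ [x], by simp, by rw [List.nodup_append]; exact ⟨P.nodup, by simp, by simpa [List.Disjoint] using fun a ha => by rintro rfl; exact h ha⟩⟩

lemma snoc_verts {x : V} (h : x ∉ P.verts) : (P.snoc x).verts = P.verts ++ [x] := by
  simp [snoc, h]

lemma snoc_first {x : V} (h : x ∉ P.verts) : (P.snoc x).first = P.first := by
  rw [first_eq, first_eq]
  have hv := P.snoc_verts h
  have hp := P.len_pos
  simp only [hv]
  rw [List.getElem_append_left hp]

lemma snoc_last {x : V} (h : x ∉ P.verts) : (P.snoc x).last = x := by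
  rw [last_eq]
  have hv := P.snoc_verts h
  simp only [hv]
  have : (P.verts ++ [x]).length - 1 = P.verts.length := by simp
  simp only [this]
  rw [List.getElem_append_right (le_refl _)]
  simp

lemma snoc_vertexSet {x : V} (h : x ∉ P.verts) :
    (P.snoc x).vertexSet = P.vertexSet ∪ {x} := by
  ext y
  simp only [vertexSet, Set.mem_setOf_eq, Set.mem_union, Set.mem_singleton_iff, P.snoc_verts h,
    List.mem_append, List.mem_singleton]

lemma snoc_edges_subset {x : V} (h : x ∉ P.verts) :
    (P.snoc x).edges ⊆ P.edges ∪ {(P.last, x)} := by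
  rintro ⟨a, b⟩ he
  rw [mem_edges_iff] at he
  obtain ⟨j, hj, ha, hb⟩ := he
  simp only [P.snoc_verts h] at hj ha hb
  have hjl : j + 1 < P.verts.length + 1 := by simpa using hj
  rcases Nat.lt_or_ge (j+1) P.verts.length with hlt | hge
  · left
    rw [mem_edges_iff]
    refine ⟨j, hlt, ?_, ?_⟩
    · rw [← ha, List.getElem_append_left]
    · rw [← hb, List.getElem_append_left]
  · right
    have hj1 : j + 1 = P.verts.length := by omega
    have hbx : b = x := by
      rw [← hb, List.getElem_append_right (by omega)]
      simp [hj1]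
    have hal : a = P.last := by
      rw [← ha, last_eq]
      rw [List.getElem_append_left (by omega)]
      congr 1
      omega
    simp [hal, hbx]


end DiPath

variable {V : Type u} {r v : V} {D : Set (V × V)} {S : Set V}

lemma not_mem_Bset_iff {u : V} :
    u ∉ Bset D r v S ↔ ∃ P, IsPath (D \ {(r, v)}) r u P ∧ P.vertexSet ∩ S = ∅ := by
  simp only [Bset, Set.mem_setOf_eq, not_forall]
  constructor
  · rintro ⟨P, hP, hne⟩
    exact ⟨P, hP, Set.not_nonempty_iff_eq_empty.1 hne⟩
  · rintro ⟨P, hP, he⟩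
    exact ⟨P, hP, by rw [he]; exact Set.not_nonempty_empty⟩

lemma S_subset_Bset : S ⊆ Bset D r v S := by
  intro s hs P hP
  exact ⟨s, by rw [← hP.2.2]; exact P.last_mem, hs⟩

lemma v_mem_Bset (hsep : Separates (D \ {(r, v)}) r v S) : v ∈ Bset D r v S :=
  fun P hP => hsep P hP

lemma r_not_mem_Bset (hrS : r ∉ S) : r ∉ Bset D r v S := by
  rw [not_mem_Bset_iff]
  refine ⟨DiPath.single r, ⟨?_, rfl, rfl⟩, ?_⟩
  · rw [IsPathIn, DiPath.single_edges]; exact Set.empty_subset _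
  · rw [DiPath.single_vertexSet, Set.singleton_inter_eq_empty]; exact hrS

/-- Forward propagation of "not in `Bset`". -/
lemma forward_step {u w : V} (hu : u ∉ Bset D r v S)
    (he : (u, w) ∈ D \ {(r, v)}) (hwS : w ∉ S) : w ∉ Bset D r v S := by
  rw [not_mem_Bset_iff] at hu ⊢
  obtain ⟨P, ⟨hPin, hPf, hPl⟩, hPS⟩ := hu
  by_cases hw : w ∈ P.verts
  · obtain ⟨i, hi, hx⟩ := List.mem_iff_getElem.1 hw
    refine ⟨P.prefixTo i, ⟨?_, ?_, ?_⟩, ?_⟩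
    · exact (P.prefixTo_edges_subset i).trans hPin
    · rw [P.prefixTo_first]; exact hPf
    · rw [P.prefixTo_last hi]; exact hx
    · exact Set.eq_empty_of_subset_empty
        (hPS ▸ Set.inter_subset_inter_left S (P.prefixTo_vertexSet_subset i))
  · refine ⟨P.snoc w, ⟨?_, ?_, ?_⟩, ?_⟩
    · intro e hee
      rcases P.snoc_edges_subset hw hee with h1 | h1
      · exact hPin h1
      · rw [Set.mem_singleton_iff] at h1
        rw [h1, hPl]
        exact he
    · rw [P.snoc_first hw]; exact hPf
    · exact P.snoc_last hw
    · rw [P.snoc_vertexSet hw, Set.union_inter_distrib_right, hPS,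
        Set.singleton_inter_eq_empty.2 hwS, Set.union_empty]

section System

variable {Ps : Set (DiPath V)} {sel : DiPath V → V}
variable (hv : v ≠ r) (hrS : r ∉ S) (hvS : v ∉ S)
variable (hPs : IntDisjSystem D r v Ps)
variable (hsel : ∀ P ∈ Ps, sel P ∈ P.internal) (hSeq : S = sel '' Ps)

include hPs hsel hSeq hrS hvS in
lemma sel_only {P : DiPath V} (hP : P ∈ Ps) {x : V} (hx : x ∈ P.vertexSet) (hxS : x ∈ S) :
    x = sel P := by
  rw [hSeq] at hxS
  obtain ⟨Q, hQ, hq⟩ := hxS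
  by_cases hPQ : P = Q
  · rw [hPQ]; exact hq.symm
  · exfalso
    have hxQ : x ∈ Q.vertexSet := hq ▸ (hsel Q hQ).1
    have := hPs.2 P hP Q hQ hPQ
    have hx2 : x ∈ ({r, v} : Set V) := this ▸ Set.mem_inter hx hxQ
    rcases hx2 with h | h
    · rw [hSeq] at hrS; exact hrS ⟨Q, hQ, h ▸ hq⟩
    · rw [hSeq] at hvS; exact hvS ⟨Q, hQ, h ▸ hq⟩

include hPs hsel in
lemma no_rv_edge {P : DiPath V} (hP : P ∈ Ps) : (r, v) ∉ P.edges := by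
  intro hrv
  rw [P.mem_edges_iff] at hrv
  obtain ⟨i, hi, hr', hv'⟩ := hrv
  obtain ⟨_, hPf, hPl⟩ := hPs.1 P hP
  have h0 : P.verts[0]'P.len_pos = r := by rw [← P.first_eq]; exact hPf
  have hi0 : i = 0 := by
    rw [← h0] at hr'
    exact (P.nodup.getElem_inj_iff.1 hr')
  have hlast : P.verts[P.verts.length - 1]'(by have := P.len_pos; omega) = v := by
    rw [← P.last_eq]; exact hPl
  have hlen : i + 1 = P.verts.length - 1 := by
    rw [← hlast] at hv'
    exact P.nodup.getElem_inj_iff.1 hv'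
  have hlen2 : P.verts.length = 2 := by omega
  have hs := hsel P hP
  obtain ⟨hmem, hne⟩ := hs
  obtain ⟨j, hj, hjeq⟩ := List.mem_iff_getElem.1 hmem
  rw [hlen2] at hj
  simp only [Set.mem_insert_iff, Set.mem_singleton_iff, not_or] at hne
  interval_cases j
  · exact hne.1 ((P.first_eq.trans hjeq).symm)
  · refine hne.2 ?_
    have hl1 : P.last = P.verts[1]'(by omega) := by
      rw [P.last_eq]; congr 1; omega
    exact (hl1.trans hjeq).symm

include hrS hvS hPs hsel hSeq in
lemma suffix_mem_Bset (hsep : Separates (D \ {(r, v)}) r v S)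
    {P : DiPath V} (hP : P ∈ Ps) {i0 : ℕ} (hi0 : i0 < P.verts.length)
    (hseli0 : P.verts[i0] = sel P) :
    ∀ k (hk : k < P.verts.length), i0 ≤ k → P.verts[k] ∈ Bset D r v S := by
  obtain ⟨hPin, hPf, hPl⟩ := hPs.1 P hP
  have hedge : ∀ j (hj : j + 1 < P.verts.length),
      (P.verts[j], P.verts[j+1]) ∈ D \ {(r, v)} := by
    intro j hj
    have hmem : (P.verts[j], P.verts[j+1]) ∈ P.edges := by
      rw [P.mem_edges_iff]; exact ⟨j, hj, rfl, rfl⟩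
    refine ⟨hPin hmem, ?_⟩
    intro hcon
    rw [Set.mem_singleton_iff] at hcon
    exact no_rv_edge hPs hsel hP (hcon ▸ hmem)
  have key : ∀ m k (hk : k < P.verts.length), k + m + 1 = P.verts.length → i0 ≤ k →
      P.verts[k] ∉ Bset D r v S → False := by
    intro m
    induction m with
    | zero =>
      intro k hk hkm _ hB
      have : P.verts[k] = v := by
        rw [← hPl, P.last_eq]
        congr 1
        omega
      rw [this] at hB; exact hB (v_mem_Bset hsep)
    | succ n ih =>
      intro k hk hkm hik hB
      have hk1 : k + 1 < P.verts.length := by omega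
      have hnS : P.verts[k+1] ∉ S := by
        intro hcon
        have : P.verts[k+1] = sel P :=
          sel_only hrS hvS hPs hsel hSeq hP (List.getElem_mem _) hcon
        rw [← hseli0] at this
        have := P.nodup.getElem_inj_iff.1 this
        omega
      exact ih (k+1) hk1 (by omega) (by omega)
        (forward_step hB (hedge k hk1) hnS)
  intro k hk hik
  by_contra hB
  exact key (P.verts.length - 1 - k) k hk (by omega) hik hB

end System
end Aux

/-- For `S ∈ 𝔖_D(v)`: `B_{S,v,D}` is a `v`-bubble of `D`, its entrance in `D−rv` is
exactly `S`, and it contains every in-neighbour of `v` in `D−rv`. -/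
theorem Bset_props {V : Type u} [Infinite V] (r : V) (D : Set (V × V))
    (hroot : IsRooted D r) (v : V) (hv : v ≠ r) (S : Set V) (hS : S ∈ SepSet D r v) :
    IsBubble D r v (Bset D r v S) ∧
      entrance (D \ {(r, v)}) (Bset D r v S) = S ∧
      ∀ w, (w, v) ∈ D \ {(r, v)} → w ∈ Bset D r v S := by
  classical
  obtain ⟨hrS, hvS, hsep, Ps, hPs, sel, hsel, hSeq⟩ := hS
  obtain ⟨hPsys, hPdisj⟩ := hPs
  have hPs' : IntDisjSystem D r v Ps := ⟨hPsys, hPdisj⟩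
  set B := Bset D r v S with hBdef
  have hvB : v ∈ B := v_mem_Bset hsep
  have hrB : r ∉ B := r_not_mem_Bset hrS
  -- Part 3
  have part3 : ∀ w, (w, v) ∈ D \ {(r, v)} → w ∈ B := by
    intro w hw
    by_contra hwB
    exact (forward_step hwB hw hvS) hvB
  -- entrance implies S (for edges avoiding (r,v))
  have hentr : ∀ x, x ∈ B → ∀ u, u ∉ B → (u, x) ∈ D \ {(r, v)} → x ∈ S := by
    intro x hxB u huB hux
    by_contra hxS
    exact (forward_step huB hux hxS) hxB
  -- S is contained in the entrance
  have hSent : ∀ s ∈ S, s ∈ entrance (D \ {(r, v)}) B := by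
    intro s hs
    have hs' := hs
    rw [hSeq] at hs'
    obtain ⟨P, hP, hselP⟩ := hs'
    have hint := hsel P hP
    rw [hselP] at hint
    obtain ⟨hsv, hne2⟩ := hint
    simp only [Set.mem_insert_iff, Set.mem_singleton_iff, not_or] at hne2
    obtain ⟨hi0, hi0lt, hi0eq⟩ := List.mem_iff_getElem.1 hsv
    obtain ⟨hPin, hPf, hPl⟩ := hPsys P hP
    have hi0ne : hi0 ≠ 0 := by
      intro h
      apply hne2.1
      rw [← hi0eq, P.first_eq]
      congr 1
    obtain ⟨j, rfl⟩ : ∃ j, hi0 = j + 1 := ⟨hi0 - 1, by omega⟩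
    have hedgeP : (P.verts[j]'(by omega), P.verts[j+1]'hi0lt) ∈ P.edges := by
      rw [P.mem_edges_iff]
      exact ⟨j, hi0lt, rfl, rfl⟩
    have hedgeD : (P.verts[j]'(by omega), P.verts[j+1]'hi0lt) ∈ D \ {(r, v)} := by
      refine ⟨hPin hedgeP, fun hc => ?_⟩
      rw [Set.mem_singleton_iff] at hc
      exact no_rv_edge hPs' hsel hP (hc ▸ hedgeP)
    have hunotB : P.verts[j]'(by omega) ∉ B := by
      rw [hBdef, not_mem_Bset_iff]
      refine ⟨P.prefixTo j, ⟨?_, ?_, ?_⟩, ?_⟩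
      · intro e he
        have heP := P.prefixTo_edges_subset j he
        refine ⟨hPin heP, fun hc => ?_⟩
        rw [Set.mem_singleton_iff] at hc
        exact no_rv_edge hPs' hsel hP (hc ▸ heP)
      · rw [P.prefixTo_first]; exact hPf
      · exact P.prefixTo_last (by omega)
      · apply Set.eq_empty_iff_forall_notMem.2
        rintro x ⟨hx1, hx2⟩
        rw [P.prefixTo_mem_iff] at hx1
        obtain ⟨j', hj', hjle, hjx⟩ := hx1
        have hxv : x ∈ P.vertexSet := by
          rw [P.mem_vertexSet_iff, List.mem_iff_getElem]
          exact ⟨j', hj', hjx⟩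
        have hxs : x = sel P := sel_only hrS hvS hPs' hsel hSeq hP hxv hx2
        have : P.verts[j']'hj' = P.verts[j+1]'hi0lt := by
          rw [hjx, hxs, hselP, ← hi0eq]
        have := P.nodup.getElem_inj_iff.1 this
        omega
    refine ⟨S_subset_Bset hs, P.verts[j]'(by omega), hunotB, ?_⟩
    rw [hi0eq] at hedgeD
    exact hedgeD
  -- Part 2
  have part2 : entrance (D \ {(r, v)}) B = S := by
    ext x
    constructor
    · rintro ⟨hxB, u, huB, hux⟩
      exact hentr x hxB u huB hux
    · exact hSent x
  -- Part 1: the bubble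
  have hnoselv : ¬∃ P, P ∈ Ps ∧ sel P = v ∧ v ∈ P.verts := by
    rintro ⟨P, hP, hPv, -⟩
    exact hvS (hSeq ▸ ⟨P, hP, hPv⟩)
  set F : V → DiPath V := fun u =>
    if h : ∃ P, P ∈ Ps ∧ sel P = u ∧ u ∈ P.verts then
      (Classical.choose h).suffixFrom
        (Classical.choose (List.mem_iff_getElem.1 (Classical.choose_spec h).2.2))
    else DiPath.single v with hFdef
  have hFv : F v = DiPath.single v := by
    rw [hFdef]
    exact dif_neg hnoselv
  have hprops : ∀ u ∈ S, ∃ P ∈ Ps, sel P = u ∧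
      IsPath (D ∩ B ×ˢ B) u v (F u) ∧ (F u).vertexSet ⊆ P.vertexSet ∧
      r ∉ (F u).vertexSet ∧ v ∈ (F u).vertexSet := by
    intro u hu
    have h : ∃ P, P ∈ Ps ∧ sel P = u ∧ u ∈ P.verts := by
      have hu' := hu
      rw [hSeq] at hu'
      obtain ⟨P, hP, hselP⟩ := hu'
      refine ⟨P, hP, hselP, ?_⟩
      have := (hsel P hP).1
      rw [hselP] at this
      exact this
    set P := Classical.choose h with hPdef
    obtain ⟨hP, hselPu, humem⟩ := Classical.choose_spec h
    set i0 := Classical.choose (List.mem_iff_getElem.1 humem) with hi0def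
    obtain ⟨hi0lt, hi0eq⟩ := Classical.choose_spec (List.mem_iff_getElem.1 humem)
    have hFeq : F u = P.suffixFrom i0 := by
      rw [hFdef]
      exact dif_pos h
    obtain ⟨hPin, hPf, hPl⟩ := hPsys P hP
    have hint := hsel P hP
    rw [hselPu] at hint
    obtain ⟨hsv, hne2⟩ := hint
    simp only [Set.mem_insert_iff, Set.mem_singleton_iff, not_or] at hne2
    have hi0ne : i0 ≠ 0 := by
      intro hc
      apply hne2.1
      rw [← hi0eq, P.first_eq]
      congr 1
    have hmemB : ∀ k (hk : k < P.verts.length), i0 ≤ k → P.verts[k] ∈ B :=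
      suffix_mem_Bset hrS hvS hPs' hsel hSeq hsep hP hi0lt (hi0eq.trans hselPu.symm)
    refine ⟨P, hP, hselPu, ⟨?_, ?_, ?_⟩, ?_, ?_, ?_⟩
    · rintro ⟨a, b⟩ he
      rw [hFeq, P.suffixFrom_edges_iff hi0lt] at he
      obtain ⟨k, hk, hik, ha, hb⟩ := he
      refine ⟨hPin (P.mem_edges_iff.2 ⟨k, hk, ha, hb⟩), ?_, ?_⟩
      · rw [← ha]; exact hmemB k (by omega) hik
      · rw [← hb]; exact hmemB (k+1) hk (by omega)
    · rw [hFeq, P.suffixFrom_first hi0lt]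
      exact hi0eq
    · rw [hFeq, P.suffixFrom_last hi0lt]
      exact hPl
    · intro x hx
      rw [hFeq, P.suffixFrom_mem_iff hi0lt] at hx
      obtain ⟨k, hk, hik, hkx⟩ := hx
      rw [P.mem_vertexSet_iff, List.mem_iff_getElem]
      exact ⟨k, hk, hkx⟩
    · intro hr
      rw [hFeq, P.suffixFrom_mem_iff hi0lt] at hr
      obtain ⟨k, hk, hik, hkr⟩ := hr
      have h0 : P.verts[0]'P.len_pos = r := by rw [← P.first_eq]; exact hPf
      rw [← h0] at hkr
      have := P.nodup.getElem_inj_iff.1 hkr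
      omega
    · rw [hFeq]
      have hlm := (P.suffixFrom i0).last_mem
      rw [P.suffixFrom_last hi0lt, hPl] at hlm
      exact hlm
  have hentD : ∀ x ∈ entrance D B, x ∈ S ∨ x = v := by
    rintro x ⟨hxB, u, huB, hux⟩
    by_cases hc : (u, x) = (r, v)
    · right; exact congrArg Prod.snd hc
    · left; exact hentr x hxB u huB ⟨hux, hc⟩
  have hsingle : IsPath (D ∩ B ×ˢ B) v v (DiPath.single v) := by
    refine ⟨?_, rfl, rfl⟩
    rw [IsPathIn, DiPath.single_edges]
    exact Set.empty_subset _
  refine ⟨⟨hrB, F, ?_, ?_⟩, part2, part3⟩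
  · intro u hu
    rcases hentD u hu with h | rfl
    · exact ((hprops u h).choose_spec).2.2.1
    · rw [hFv]; exact hsingle
  · intro u hu u' hu' hne
    have hone : ∀ a ∈ S, (F a).vertexSet ∩ (DiPath.single v).vertexSet = {v} := by
      intro a ha
      obtain ⟨P, hP, hselP, hpath, hsub, hrP, hvP⟩ := hprops a ha
      rw [DiPath.single_vertexSet]
      ext x
      simp only [Set.mem_inter_iff, Set.mem_singleton_iff]
      constructor
      · rintro ⟨-, hx⟩; exact hx
      · rintro rfl; exact ⟨hvP, rfl⟩
    rcases hentD u hu with h | rfl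
    · rcases hentD u' hu' with h' | rfl
      · obtain ⟨P, hP, hselP, hpath, hsub, hrP, hvP⟩ := hprops u h
        obtain ⟨Q, hQ, hselQ, hpath', hsub', hrQ, hvQ⟩ := hprops u' h'
        have hPQ : P ≠ Q := by
          intro hc
          apply hne
          rw [← hselP, ← hselQ, hc]
        apply Set.Subset.antisymm
        · rintro x ⟨hx1, hx2⟩
          have hx12 : x ∈ ({r, v} : Set V) := by
            rw [← hPdisj P hP Q hQ hPQ]
            exact ⟨hsub hx1, hsub' hx2⟩
          rcases hx12 with hh | hh
          · exact absurd (hh ▸ hx1) hrP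
          · exact hh
        · rintro x hx
          rw [Set.mem_singleton_iff] at hx
          subst hx
          exact ⟨hvP, hvQ⟩
      · rw [hFv]
        exact hone u h
    · rcases hentD u' hu' with h' | rfl
      · rw [hFv, Set.inter_comm]
        exact hone u' h'
      · exact absurd rfl hne

end FlamePaper
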